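/- Every perfect coloring of the infinite path graph, up to renaming colors and translation/reflection of ℤ, is one of: a cyclic coloring c(n) = n mod k; a mirror coloring of type (1,1), (1,2), or (2,2). Equivalently: if c : ℤ → I is a perfect coloring using all colors of I with |I| = k, then c is periodic with period dividing k, 2k−2, 2k−1, or 2k, and within a period each color appears at most twice with the colors arranged monotonically up then down. -/

import Mathlib

/-- The infinite path graph on the integers. -/
def pathGraph : SimpleGraph ℤ := SimpleGraph.fromRel (fun u v => v = u + 1)

/-- Number of neighbors of `v` colored `j` under coloring `c`. -/
noncomputable def nbrCount {V I : Type*} (G : SimpleGraph V) (c : V → I) (v : V) (j : I) : ℕ :=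
  {u | G.Adj v u ∧ c u = j}.ncard

/-- A coloring is perfect if the number of neighbors of each color depends only
on the color of the vertex. -/
def IsPerfectColoring {V I : Type*} (G : SimpleGraph V) (c : V → I) : Prop :=
  ∀ v w, c v = c w → ∀ j, nbrCount G c v j = nbrCount G c w j

/-- Lexicographic product of two simple graphs. -/
def lexProd {V W : Type*} (G : SimpleGraph V) (H : SimpleGraph W) : SimpleGraph (V × W) :=
  SimpleGraph.fromRel (fun p q => G.Adj p.1 q.1 ∨ (p.1 = q.1 ∧ H.Adj p.2 q.2))
/-- The cyclic coloring with period `[0 1 … k-1]`. -/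
def cycCol (k : ℤ) : ℤ → ℤ := fun n => n % k

/-- The mirror coloring of type (1,1), period `[k-1 … 1 0 1 … k-2]`. -/
def mirror11 (k : ℤ) : ℤ → ℤ := fun n => |n % (2 * k - 2) - (k - 1)|

/-- The mirror coloring of type (1,2), period `[k-1 … 1 0 1 … k-1]`. -/
def mirror12 (k : ℤ) : ℤ → ℤ := fun n => |n % (2 * k - 1) - (k - 1)|

/-- The mirror coloring of type (2,2), period `[k-1 … 1 0 0 1 … k-1]`. -/
def mirror22 (k : ℤ) : ℤ → ℤ := fun n => min (n % (2 * k)) (2 * k - 1 - n % (2 * k))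

/-!
If `c a = c b`, perfectness makes the unordered pairs of colours around `a` and around `b`
equal, so they agree either in order or reversed; by induction `c` is then invariant under the
whole translation or reflection of `ℤ` carrying `a` to `b`. Pigeonhole on consecutive pairs of
colours gives a period, and the periods form a subgroup `pℤ`. Hence `c m = c n` iff
`p ∣ m - n`, or, when `c` has a reflection symmetry `x ↦ s - x`, iff `p ∣ m - n` or
`p ∣ m + n - s`. These are exactly the fibres of the cyclic coloring, resp. of a translate of
the mirror coloring whose type is fixed by the parities of `p` and `s`; so `c` is that coloring
up to renaming of colours, and counting values identifies `|I|`.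
-/

namespace Int

lemma emod_eq_emod_iff_dvd_sub {q x y : ℤ} : x % q = y % q ↔ q ∣ x - y :=
  emod_eq_emod_iff_emod_sub_eq_zero.trans dvd_iff_emod_eq_zero.symm

lemma dvd_add_add_iff_dvd_emod_add_emod_add {q : ℤ} (x y r : ℤ) :
    q ∣ x + y + r ↔ q ∣ x % q + y % q + r := by
  have : x + y + r = (x % q + y % q + r) + q * (x / q + y / q) := by
    linear_combination (emod_add_mul_ediv x q).symm + (emod_add_mul_ediv y q).symm
  rw [this, dvd_add_left (dvd_mul_right _ _)]

lemma dvd_iff_eq_zero_or_eq_of_lt_two_mul {q s : ℤ} (hs : 0 ≤ s) (hsq : s < 2 * q) :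
    q ∣ s ↔ s = 0 ∨ s = q := by
  constructor
  · rintro ⟨w, rfl⟩
    obtain rfl | rfl : w = 0 ∨ w = 1 := by
      rcases lt_trichotomy w 0 with h | h | h
      · nlinarith
      · exact .inl h
      · right; nlinarith
    all_goals simp
  · rintro (rfl | rfl) <;> simp

end Int

lemma cycCol_eq_iff {k x y : ℤ} : cycCol k x = cycCol k y ↔ k ∣ x - y :=
  Int.emod_eq_emod_iff_dvd_sub

lemma mirror11_eq_iff {k x y : ℤ} (hk : 2 ≤ k) :
    mirror11 k x = mirror11 k y ↔ 2 * k - 2 ∣ x - y ∨ 2 * k - 2 ∣ x + y := by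
  have hq : 0 < 2 * k - 2 := by omega
  have := Int.emod_nonneg x hq.ne'
  have := Int.emod_nonneg y hq.ne'
  have := Int.emod_lt_of_pos x hq
  have := Int.emod_lt_of_pos y hq
  rw [mirror11, mirror11, abs_eq_abs, ← Int.emod_eq_emod_iff_dvd_sub, ← add_zero (x + y),
    Int.dvd_add_add_iff_dvd_emod_add_emod_add, Int.dvd_iff_eq_zero_or_eq_of_lt_two_mul (by omega)
    (by omega)]
  omega

lemma mirror12_eq_iff {k x y : ℤ} (hk : 1 ≤ k) :
    mirror12 k x = mirror12 k y ↔ 2 * k - 1 ∣ x - y ∨ 2 * k - 1 ∣ x + y + 1 := by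
  have hq : 0 < 2 * k - 1 := by omega
  have := Int.emod_nonneg x hq.ne'
  have := Int.emod_nonneg y hq.ne'
  have := Int.emod_lt_of_pos x hq
  have := Int.emod_lt_of_pos y hq
  rw [mirror12, mirror12, abs_eq_abs, ← Int.emod_eq_emod_iff_dvd_sub,
    Int.dvd_add_add_iff_dvd_emod_add_emod_add, Int.dvd_iff_eq_zero_or_eq_of_lt_two_mul (by omega)
    (by omega)]
  omega

lemma mirror22_eq_iff {k x y : ℤ} (hk : 1 ≤ k) :
    mirror22 k x = mirror22 k y ↔ 2 * k ∣ x - y ∨ 2 * k ∣ x + y + 1 := by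
  have hq : 0 < 2 * k := by omega
  have := Int.emod_nonneg x hq.ne'
  have := Int.emod_nonneg y hq.ne'
  have := Int.emod_lt_of_pos x hq
  have := Int.emod_lt_of_pos y hq
  rw [mirror22, mirror22, ← Int.emod_eq_emod_iff_dvd_sub,
    Int.dvd_add_add_iff_dvd_emod_add_emod_add, Int.dvd_iff_eq_zero_or_eq_of_lt_two_mul (by omega)
    (by omega)]
  omega

lemma range_cycCol {k : ℤ} (hk : 0 < k) : Set.range (cycCol k) = Set.Ico 0 k := by
  ext v
  refine ⟨?_, fun hv => ⟨v, Int.emod_eq_of_lt hv.1 hv.2⟩⟩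
  rintro ⟨n, rfl⟩
  exact ⟨Int.emod_nonneg n hk.ne', Int.emod_lt_of_pos n hk⟩

lemma range_mirror11 {k : ℤ} (hk : 2 ≤ k) : Set.range (mirror11 k) = Set.Ico 0 k := by
  have hq : 0 < 2 * k - 2 := by omega
  ext v
  constructor
  · rintro ⟨n, rfl⟩
    have := Int.emod_nonneg n hq.ne'
    have := Int.emod_lt_of_pos n hq
    exact ⟨abs_nonneg _, abs_lt.mpr ⟨by omega, by omega⟩⟩
  · rintro ⟨hv0, hvk⟩
    refine ⟨k - 1 - v, ?_⟩
    rw [mirror11, Int.emod_eq_of_lt (by omega) (by omega), sub_sub_cancel_left, abs_neg,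
      abs_of_nonneg hv0]

lemma range_mirror12 {k : ℤ} (hk : 1 ≤ k) : Set.range (mirror12 k) = Set.Ico 0 k := by
  have hq : 0 < 2 * k - 1 := by omega
  ext v
  constructor
  · rintro ⟨n, rfl⟩
    have := Int.emod_nonneg n hq.ne'
    have := Int.emod_lt_of_pos n hq
    exact ⟨abs_nonneg _, abs_lt.mpr ⟨by omega, by omega⟩⟩
  · rintro ⟨hv0, hvk⟩
    refine ⟨k - 1 + v, ?_⟩
    rw [mirror12, Int.emod_eq_of_lt (by omega) (by omega), add_sub_cancel_left,
      abs_of_nonneg hv0]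

lemma range_mirror22 {k : ℤ} (hk : 1 ≤ k) : Set.range (mirror22 k) = Set.Ico 0 k := by
  have hq : 0 < 2 * k := by omega
  ext v
  constructor
  · rintro ⟨n, rfl⟩
    have := Int.emod_nonneg n hq.ne'
    have := Int.emod_lt_of_pos n hq
    simp only [mirror22, Set.mem_Ico]
    omega
  · rintro ⟨hv0, hvk⟩
    refine ⟨v, ?_⟩
    rw [mirror22, Int.emod_eq_of_lt hv0 (by omega)]
    omega

namespace Multiset

lemma pair_inj_right {α : Type*} {a b b' : α} : ({a, b} : Multiset α) = {a, b'} ↔ b = b' := by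
  rw [insert_eq_cons, insert_eq_cons, cons_inj_right, singleton_inj]

lemma pair_inj_left {α : Type*} {a a' b : α} : ({a, b} : Multiset α) = {a', b} ↔ a = a' := by
  rw [pair_comm, pair_comm a', pair_inj_right]

end Multiset

namespace Function

lemma Periodic.apply_eq_of_sub {α β : Type*} [AddCommGroup α] {f : α → β} {a b : α}
    (h : Periodic f (a - b)) : f a = f b := by
  simpa using h b

lemma exists_pos_forall_periodic_iff_dvd {α : Type*} {f : ℤ → α} {t₀ : ℤ} (ht₀ : t₀ ≠ 0)
    (hf : Periodic f t₀) : ∃ p : ℤ, 0 < p ∧ ∀ t, Periodic f t ↔ p ∣ t := by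
  let periods : Ideal ℤ :=
    { carrier := {t | Periodic f t}
      add_mem' := fun ha hb => ha.add_period hb
      zero_mem' := periodic_with_period_zero f
      smul_mem' := fun n _ ht => ht.int_mul n }
  obtain ⟨g, hg⟩ := Submodule.IsPrincipal.principal periods
  have hdvd : ∀ t, Periodic f t ↔ |g| ∣ t := fun t => by
    rw [abs_dvd, ← Ideal.mem_span_singleton]
    exact Iff.of_eq (congrArg (t ∈ ·) hg)
  refine ⟨|g|, abs_pos.mpr fun hg0 => ht₀ ?_, hdvd⟩
  simpa [hg0] using (hdvd t₀).mp hf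

end Function

open Function

lemma nbrCount_pathGraph {I : Type*} [DecidableEq I] (c : ℤ → I) (v : ℤ) (j : I) :
    nbrCount pathGraph c v j = Multiset.count j {c (v - 1), c (v + 1)} := by
  have hnbrs : {u | pathGraph.Adj v u ∧ c u = j} =
      ↑(({v - 1, v + 1} : Finset ℤ).filter (c · = j)) := by
    ext u
    simp only [pathGraph, SimpleGraph.fromRel_adj, Set.mem_ofPred_eq, Finset.coe_filter,
      Finset.mem_insert, Finset.mem_singleton]
    exact and_congr_left fun _ => by omega
  rw [nbrCount, hnbrs, Set.ncard_coe_finset, Finset.filter_insert, Finset.filter_singleton]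
  have : v - 1 ≠ v + 1 := by omega
  split_ifs <;> simp_all [Multiset.count_cons, eq_comm]

namespace IsPerfectColoring

variable {I : Type*} {c : ℤ → I}

lemma nbrs_eq (h : IsPerfectColoring pathGraph c) {a b ε : ℤ} (hε : ε = 1 ∨ ε = -1)
    (hab : c a = c b) :
    ({c (a - 1), c (a + 1)} : Multiset I) = {c (b - ε), c (b + ε)} := by
  classical
  have h1 : ({c (a - 1), c (a + 1)} : Multiset I) = {c (b - 1), c (b + 1)} :=
    Multiset.ext.mpr fun j => by rw [← nbrCount_pathGraph, ← nbrCount_pathGraph, h a b hab]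
  rcases hε with rfl | rfl
  · exact h1
  · rw [h1, sub_neg_eq_add, ← sub_eq_add_neg, Multiset.pair_comm]

lemma apply_add_eq (h : IsPerfectColoring pathGraph c) {a b ε : ℤ} (hε : ε = 1 ∨ ε = -1)
    (h0 : c a = c b) (h1 : c (a + 1) = c (b + ε)) (d : ℤ) :
    c (a + d) = c (b + ε * d) := by
  suffices ∀ d : ℤ, c (a + d) = c (b + ε * d) ∧ c (a + d + 1) = c (b + ε * d + ε) from
    (this d).1
  intro d
  induction d using Int.induction_on with
  | zero => simpa using ⟨h0, h1⟩
  | succ d ih =>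
    have hnbrs := h.nbrs_eq hε ih.2
    rw [add_sub_cancel_right, add_sub_cancel_right, ih.1, Multiset.pair_inj_right] at hnbrs
    exact ⟨by convert ih.2 using 2 <;> ring, by convert hnbrs using 2 <;> ring⟩
  | pred d ih =>
    have hnbrs := h.nbrs_eq hε ih.1
    rw [ih.2, Multiset.pair_inj_left] at hnbrs
    exact ⟨by convert hnbrs using 2 <;> ring, by convert ih.1 using 2 <;> ring⟩

lemma exists_periodic [Finite I] (h : IsPerfectColoring pathGraph c) :
    ∃ t ≠ 0, Periodic c t := by
  obtain ⟨x, y, hxy, hc⟩ := Finite.exists_ne_map_eq_of_infinite fun n => (c n, c (n + 1))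
  rw [Prod.mk.injEq] at hc
  refine ⟨y - x, sub_ne_zero.mpr hxy.symm, fun n => ?_⟩
  convert (h.apply_add_eq (.inl rfl) hc.1 hc.2 (n - x)).symm using 2 <;> ring

lemma periodic_or_reflection (h : IsPerfectColoring pathGraph c) {m n : ℤ} (hmn : c m = c n) :
    Periodic c (n - m) ∨ ∀ x, c (m + n - x) = c x := by
  have hmem : c (m + 1) ∈ ({c (n - 1), c (n + 1)} : Multiset I) := by
    rw [← h.nbrs_eq (.inl rfl) hmn]
    simp
  rcases Multiset.mem_cons.mp hmem with h1 | h1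
  · right
    intro x
    rw [sub_eq_add_neg] at h1
    convert (h.apply_add_eq (.inr rfl) hmn h1 (x - m)).symm using 2 <;> ring
  · left
    intro x
    convert (h.apply_add_eq (.inl rfl) hmn (Multiset.mem_singleton.mp h1) (x - m)).symm
      using 2 <;> ring

variable {p : ℤ}

lemma apply_eq_apply_iff_of_not_reflection (h : IsPerfectColoring pathGraph c)
    (hp : ∀ t, Periodic c t ↔ p ∣ t) (hs : ¬∃ s, ∀ x, c (s - x) = c x) (m n : ℤ) :
    c m = c n ↔ p ∣ m - n := by
  refine ⟨fun hmn => ?_, fun hd => ((hp _).mpr hd).apply_eq_of_sub⟩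
  rcases h.periodic_or_reflection hmn with hper | hrefl
  · exact dvd_sub_comm.mp ((hp _).mp hper)
  · exact (hs ⟨m + n, hrefl⟩).elim

lemma apply_eq_apply_iff_of_reflection (h : IsPerfectColoring pathGraph c)
    (hp : ∀ t, Periodic c t ↔ p ∣ t) {s : ℤ} (hs : ∀ x, c (s - x) = c x) (m n : ℤ) :
    c m = c n ↔ p ∣ m - n ∨ p ∣ m + n - s := by
  constructor
  · intro hmn
    rcases h.periodic_or_reflection hmn with hper | hrefl
    · exact .inl (dvd_sub_comm.mp ((hp _).mp hper))
    · refine .inr ((hp _).mp fun x => ?_)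
      -- the composite of the reflections about `s` and about `m + n` is a translation
      calc c (x + (m + n - s)) = c (m + n - (s - x)) := by ring_nf
        _ = c x := by rw [hrefl, hs]
  · rintro (hd | hd)
    · exact ((hp _).mpr hd).apply_eq_of_sub
    · calc c m = c (s - m) := (hs m).symm
        _ = c n := ((hp _).mpr (by convert hd using 1; ring)).apply_eq_of_sub.symm

end IsPerfectColoring

def IsTranslatedModel (F : ℤ → ℤ → ℤ) (k t : ℤ) (r : ℤ → ℤ → Prop) : Prop :=
  Set.range (F k) = Set.Ico 0 k ∧ ∀ m n, r m n ↔ F k (m + t) = F k (n + t)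

lemma Function.Surjective.exists_injective_comp_eq {α β γ : Type*} {c : α → β}
    (hc : Surjective c) {M : α → γ} (h : ∀ m n, c m = c n ↔ M m = M n) :
    ∃ e : β → γ, Injective e ∧ e ∘ c = M := by
  refine ⟨M ∘ surjInv hc, fun i j hij => ?_, funext fun n => ?_⟩
  · rw [← surjInv_eq hc i, ← surjInv_eq hc j]
    exact (h _ _).mpr hij
  · exact (h _ _).mp (surjInv_eq hc (c n))

lemma IsTranslatedModel.exists_injective {I : Type*} [Fintype I] {c : ℤ → I}
    (hc : Surjective c) {F : ℤ → ℤ → ℤ} {k t : ℤ} {r : ℤ → ℤ → Prop}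
    (hF : IsTranslatedModel F k t r) (hr : ∀ m n, c m = c n ↔ r m n) :
    ∃ e : I → ℤ, Injective e ∧ ∀ n, e (c n) = F (Fintype.card I) (n + t) := by
  obtain ⟨hrange, hker⟩ := hF
  obtain ⟨e, he, hec⟩ := hc.exists_injective_comp_eq fun m n => (hr m n).trans (hker m n)
  have hrange_e : Set.range e = Set.Ico 0 k := by
    rw [← hc.range_comp, hec, ← hrange]
    exact (add_right_surjective t).range_comp (F k)
  have hk : 0 ≤ k := by
    obtain ⟨h0, hk⟩ : F k 0 ∈ Set.Ico 0 k := hrange ▸ Set.mem_range_self 0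
    exact (h0.trans_lt hk).le
  have hcard : (Fintype.card I : ℤ) = k := by
    rw [← Nat.card_eq_fintype_card, ← Nat.card_range_of_injective he, hrange_e,
      Nat.card_eq_fintype_card, Int.card_fintype_Ico_of_le _ _ hk, sub_zero]
  exact ⟨e, he, fun n => hcard ▸ congrFun hec n⟩

lemma isTranslatedModel_cycCol {p : ℤ} (hp : 0 < p) :
    IsTranslatedModel cycCol p 0 fun m n => p ∣ m - n :=
  ⟨range_cycCol hp, fun m n => by simp only [add_zero, cycCol_eq_iff]⟩

lemma exists_isTranslatedModel_mirror {p : ℤ} (hp : 0 < p) (s : ℤ) :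
    ∃ k t : ℤ, let r := fun m n => p ∣ m - n ∨ p ∣ m + n - s
      IsTranslatedModel mirror11 k t r ∨ IsTranslatedModel mirror12 k t r ∨
        IsTranslatedModel mirror22 k t r := by
  obtain ⟨j, rfl | rfl⟩ := Int.even_or_odd' p
  · obtain ⟨u, rfl | rfl⟩ := Int.even_or_odd' s
    · refine ⟨j + 1, -u, .inl ⟨range_mirror11 (by omega), fun m n => ?_⟩⟩
      rw [mirror11_eq_iff (by omega), add_sub_add_right_eq_sub,
        show m + -u + (n + -u) = m + n - 2 * u by ring, show 2 * (j + 1) - 2 = 2 * j by ring]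
    · refine ⟨j, -u - 1, .inr (.inr ⟨range_mirror22 (by omega), fun m n => ?_⟩)⟩
      rw [mirror22_eq_iff (by omega), add_sub_add_right_eq_sub,
        show m + (-u - 1) + (n + (-u - 1)) + 1 = m + n - (2 * u + 1) by ring]
  · -- `j + 1` is the inverse of `2` modulo `2 * j + 1`
    refine ⟨j + 1, -(j + 1) * (s + 1),
      .inr (.inl ⟨range_mirror12 (by omega), fun m n => ?_⟩)⟩
    rw [mirror12_eq_iff (by omega), add_sub_add_right_eq_sub,
      show 2 * (j + 1) - 1 = 2 * j + 1 by ring,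
      show m + -(j + 1) * (s + 1) + (n + -(j + 1) * (s + 1)) + 1
        = m + n - s - (2 * j + 1) * (s + 1) by ring, dvd_sub_left (dvd_mul_right _ _)]

/-- Classification: every perfect coloring of the infinite path graph is, up to
renaming colors and translation/reflection of ℤ, a cyclic coloring or a mirror
coloring of type (1,1), (1,2) or (2,2). -/
theorem perfectColoring_path_classification {I : Type*} [Fintype I]
    (c : ℤ → I) (hsurj : Function.Surjective c)
    (h : IsPerfectColoring pathGraph c) :
    ∃ e : I → ℤ, Function.Injective e ∧
      ∃ ε t : ℤ, (ε = 1 ∨ ε = -1) ∧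
        ((∀ n : ℤ, e (c n) = cycCol (Fintype.card I) (ε * n + t)) ∨
         (∀ n : ℤ, e (c n) = mirror11 (Fintype.card I) (ε * n + t)) ∨
         (∀ n : ℤ, e (c n) = mirror12 (Fintype.card I) (ε * n + t)) ∨
         (∀ n : ℤ, e (c n) = mirror22 (Fintype.card I) (ε * n + t))) := by
  suffices ∃ e : I → ℤ, Function.Injective e ∧ ∃ t : ℤ,
      (∀ n, e (c n) = cycCol (Fintype.card I) (n + t)) ∨
      (∀ n, e (c n) = mirror11 (Fintype.card I) (n + t)) ∨
      (∀ n, e (c n) = mirror12 (Fintype.card I) (n + t)) ∨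
      (∀ n, e (c n) = mirror22 (Fintype.card I) (n + t)) by
    obtain ⟨e, he, t, hec⟩ := this
    exact ⟨e, he, 1, t, .inl rfl, by simpa only [one_mul] using hec⟩
  obtain ⟨t₀, ht₀, hper⟩ := h.exists_periodic
  obtain ⟨p, hp, hperiods⟩ := exists_pos_forall_periodic_iff_dvd ht₀ hper
  by_cases hrefl : ∃ s, ∀ x, c (s - x) = c x
  · obtain ⟨s, hs⟩ := hrefl
    have hker := h.apply_eq_apply_iff_of_reflection hperiods hs
    obtain ⟨k, t, hF | hF | hF⟩ := exists_isTranslatedModel_mirror hp s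
    · obtain ⟨e, he, hec⟩ := hF.exists_injective hsurj hker
      exact ⟨e, he, t, .inr (.inl hec)⟩
    · obtain ⟨e, he, hec⟩ := hF.exists_injective hsurj hker
      exact ⟨e, he, t, .inr (.inr (.inl hec))⟩
    · obtain ⟨e, he, hec⟩ := hF.exists_injective hsurj hker
      exact ⟨e, he, t, .inr (.inr (.inr hec))⟩
  · obtain ⟨e, he, hec⟩ := (isTranslatedModel_cycCol hp).exists_injective hsurj
      (h.apply_eq_apply_iff_of_not_reflection hperiods hrefl)
    exact ⟨e, he, 0, .inl hec⟩
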